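/- Suppose R ⪰ 0 and set P_u := [[−2 I_{n₂}, −2 I_{n₂}],[−2 I_{n₂}, −2 I_{n₂}]]. If there exist a symmetric X ∈ ℝ^{n×n} with X ≻ 0 and τ > 0 such that L̃(X, τ) ≺ 0, then the lifted reset closed loop obtained by taking Δ_k = −identity for all k, namely η(k+1) = (Ã − B̃_u C_u) η(k) + B̃ w̃(k), z̃(k) = (C̃ − D̃_u C_u) η(k) + D̃ w̃(k), satisfies quadratic performance specified by P̃: (i) for w̃ ≡ 0 every trajectory satisfies η(k) → 0; (ii) there exists ε > 0 such that for every trajectory with η(0) = 0 and square-summable w̃, the series Σ_k (w̃(k), z̃(k))ᵀ P̃ (w̃(k), z̃(k)) converges and its value is ≤ −ε Σ_k ‖w̃(k)‖². -/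

import Mathlib

open Matrix Filter Topology Kronecker

/-- Trajectories of a discrete-time LTI system
`x(t+1) = 𝒜 x(t) + ℬ u(t)`, `y(t) = 𝒞 x(t) + 𝒟 u(t)`. -/
def IsTraj {St In Out : Type*} [Fintype St] [Fintype In] [Fintype Out]
    (A : Matrix St St ℝ) (B : Matrix St In ℝ) (C : Matrix Out St ℝ) (D : Matrix Out In ℝ)
    (x : ℕ → St → ℝ) (u : ℕ → In → ℝ) (y : ℕ → Out → ℝ) : Prop :=
  ∀ t : ℕ, x (t + 1) = A.mulVec (x t) + B.mulVec (u t) ∧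
    y t = C.mulVec (x t) + D.mulVec (u t)

/-- The system satisfies quadratic performance specified by `Π`. -/
def QuadPerf {St In Out : Type*} [Fintype St] [Fintype In] [Fintype Out]
    (A : Matrix St St ℝ) (B : Matrix St In ℝ) (C : Matrix Out St ℝ) (D : Matrix Out In ℝ)
    (P : Matrix (In ⊕ Out) (In ⊕ Out) ℝ) : Prop :=
  (∀ x : ℕ → St → ℝ, (∀ t : ℕ, x (t + 1) = A.mulVec (x t)) →
      Filter.Tendsto x Filter.atTop (nhds 0)) ∧
  ∃ ε > (0 : ℝ), ∀ x u y, IsTraj A B C D x u y → x 0 = 0 →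
    Summable (fun t => u t ⬝ᵥ u t) →
    ∃ l : ℝ,
      Filter.Tendsto (fun N => ∑ t ∈ Finset.range N,
        Sum.elim (u t) (y t) ⬝ᵥ P.mulVec (Sum.elim (u t) (y t))) Filter.atTop (nhds l) ∧
      l ≤ -ε * ∑' t, u t ⬝ᵥ u t

/-- Lifted input matrix `B̃ = [A^{T-1}B, A^{T-2}B, …, B]`. -/
noncomputable def Btil {St : Type*} [Fintype St] [DecidableEq St] {m : ℕ} (T : ℕ) (A : Matrix St St ℝ)
    (B : Matrix St (Fin m) ℝ) : Matrix St (Fin T × Fin m) ℝ :=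
  Matrix.of fun i p => (A ^ (T - 1 - (p.1 : ℕ)) * B) i p.2

/-- Lifted output matrix `C̃` with block rows `C, CA, …, CA^{T-1}`. -/
noncomputable def Ctil {St : Type*} [Fintype St] [DecidableEq St] {q : ℕ} (T : ℕ) (A : Matrix St St ℝ)
    (C : Matrix (Fin q) St ℝ) : Matrix (Fin T × Fin q) St ℝ :=
  Matrix.of fun p j => (C * A ^ (p.1 : ℕ)) p.2 j

/-- Lifted feedthrough matrix `D̃`, block lower triangular with `(i,j)` block `D` if
`i = j`, `C A^{i-j-1} B` if `i > j`, and `0` if `i < j`. -/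
noncomputable def Dtil {St : Type*} [Fintype St] [DecidableEq St] {m q : ℕ} (T : ℕ) (A : Matrix St St ℝ)
    (B : Matrix St (Fin m) ℝ) (C : Matrix (Fin q) St ℝ)
    (D : Matrix (Fin q) (Fin m) ℝ) : Matrix (Fin T × Fin q) (Fin T × Fin m) ℝ :=
  Matrix.of fun p r =>
    if (p.1 : ℕ) = (r.1 : ℕ) then D p.2 r.2
    else if (r.1 : ℕ) < (p.1 : ℕ) then
      (C * A ^ ((p.1 : ℕ) - (r.1 : ℕ) - 1) * B) p.2 r.2
    else 0

/-- The lifted performance matrix `P̃ = [[I_T ⊗ Q, I_T ⊗ S], [I_T ⊗ Sᵀ, I_T ⊗ R]]`. -/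
noncomputable def Ptil {m q : ℕ} (T : ℕ) (Q : Matrix (Fin m) (Fin m) ℝ)
    (S : Matrix (Fin m) (Fin q) ℝ) (R : Matrix (Fin q) (Fin q) ℝ) :
    Matrix ((Fin T × Fin m) ⊕ (Fin T × Fin q)) ((Fin T × Fin m) ⊕ (Fin T × Fin q)) ℝ :=
  Matrix.fromBlocks ((1 : Matrix (Fin T) (Fin T) ℝ) ⊗ₖ Q)
    ((1 : Matrix (Fin T) (Fin T) ℝ) ⊗ₖ S)
    ((1 : Matrix (Fin T) (Fin T) ℝ) ⊗ₖ Sᵀ)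
    ((1 : Matrix (Fin T) (Fin T) ℝ) ⊗ₖ R)

/-- The uncertainty input matrix `B_u = [0; A_c]`, where `A_c` is the lower-right
(controller) block of `A`. -/
noncomputable def Bu {n₁ n₂ : ℕ} (A : Matrix (Fin n₁ ⊕ Fin n₂) (Fin n₁ ⊕ Fin n₂) ℝ) :
    Matrix (Fin n₁ ⊕ Fin n₂) (Fin n₂) ℝ :=
  Matrix.of fun i j =>
    Sum.elim (fun _ : Fin n₁ => (0 : ℝ)) (fun i₂ => A (Sum.inr i₂) (Sum.inr j)) i

/-- The uncertainty output matrix `C_u = [0, I]` selecting the controller state. -/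
noncomputable def Cu (n₁ n₂ : ℕ) : Matrix (Fin n₂) (Fin n₁ ⊕ Fin n₂) ℝ :=
  Matrix.of fun i j =>
    Sum.elim (fun _ : Fin n₁ => (0 : ℝ)) (fun j₂ => if i = j₂ then 1 else 0) j

/-- The lifted uncertainty input matrix `B̃_u = A^{T-1} B_u`. -/
noncomputable def Butil {n₁ n₂ : ℕ} (T : ℕ)
    (A : Matrix (Fin n₁ ⊕ Fin n₂) (Fin n₁ ⊕ Fin n₂) ℝ) :
    Matrix (Fin n₁ ⊕ Fin n₂) (Fin n₂) ℝ :=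
  A ^ (T - 1) * Bu A

/-- The lifted uncertainty feedthrough matrix `D̃_u` with block rows
`0, C B_u, C A B_u, …, C A^{T-2} B_u`. -/
noncomputable def Dutil {n₁ n₂ q : ℕ} (T : ℕ)
    (A : Matrix (Fin n₁ ⊕ Fin n₂) (Fin n₁ ⊕ Fin n₂) ℝ)
    (C : Matrix (Fin q) (Fin n₁ ⊕ Fin n₂) ℝ) : Matrix (Fin T × Fin q) (Fin n₂) ℝ :=
  Matrix.of fun p j =>
    if (p.1 : ℕ) = 0 then 0 else (C * A ^ ((p.1 : ℕ) - 1) * Bu A) p.2 j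

/-- The robust LMI matrix `L̃(X, τ)` combining the lifted dynamics, the lifted
performance multiplier `P̃`, and the uncertainty multiplier `τ P_u`. -/
noncomputable def Ltil {n₁ n₂ m q : ℕ} (T : ℕ)
    (A : Matrix (Fin n₁ ⊕ Fin n₂) (Fin n₁ ⊕ Fin n₂) ℝ)
    (B : Matrix (Fin n₁ ⊕ Fin n₂) (Fin m) ℝ)
    (C : Matrix (Fin q) (Fin n₁ ⊕ Fin n₂) ℝ) (D : Matrix (Fin q) (Fin m) ℝ)
    (Q : Matrix (Fin m) (Fin m) ℝ) (S : Matrix (Fin m) (Fin q) ℝ)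
    (R : Matrix (Fin q) (Fin q) ℝ)
    (Pu : Matrix (Fin n₂ ⊕ Fin n₂) (Fin n₂ ⊕ Fin n₂) ℝ)
    (X : Matrix (Fin n₁ ⊕ Fin n₂) (Fin n₁ ⊕ Fin n₂) ℝ) (τ : ℝ) :
    Matrix (((Fin n₁ ⊕ Fin n₂)) ⊕ ((Fin T × Fin m) ⊕ Fin n₂))
      (((Fin n₁ ⊕ Fin n₂)) ⊕ ((Fin T × Fin m) ⊕ Fin n₂)) ℝ :=
  (Matrix.fromBlocks (n := Fin n₁ ⊕ Fin n₂) 1 0 (A ^ T) (Matrix.fromCols (Btil T A B) (Butil T A)))ᵀ *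
      Matrix.fromBlocks (-X) 0 0 X *
      Matrix.fromBlocks (n := Fin n₁ ⊕ Fin n₂) 1 0 (A ^ T) (Matrix.fromCols (Btil T A B) (Butil T A))
    + (Matrix.fromBlocks (n := Fin T × Fin m) 0 (Matrix.fromCols 1 0) (Ctil T A C)
        (Matrix.fromCols (Dtil T A B C D) (Dutil T A C)))ᵀ *
      Ptil T Q S R *
      Matrix.fromBlocks (n := Fin T × Fin m) 0 (Matrix.fromCols 1 0) (Ctil T A C)
        (Matrix.fromCols (Dtil T A B C D) (Dutil T A C))
    + (Matrix.fromBlocks (n := Fin n₂) 0 (Matrix.fromCols 0 1) (Cu n₁ n₂) 0)ᵀ *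
      (τ • Pu) *
      Matrix.fromBlocks (n := Fin n₂) 0 (Matrix.fromCols 0 1) (Cu n₁ n₂) 0

/-!
Take `V(ξ) = ξᵀ X ξ` as storage function. Evaluating `L̃(X, τ)` at `(ξ, w, -C_u ξ)`, i.e. along the
reset `Δ = -I`, the multiplier term drops out because `P_u` annihilates `(-y, y)`, and `L̃ ≺ 0`
becomes the strict dissipation inequality `V(ξ⁺) - V(ξ) + s(w, z) ≤ -μ (|ξ|² + |w|²)` for the
supply `s` given by `P̃`. Since `R ⪰ 0` makes `s(0, z) ≥ 0`, `V` is a strict Lyapunov function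
of the unforced loop, so free trajectories are square summable and tend to zero. A strict
Lyapunov function also bounds the state energy by the input energy, so for square-summable `w̃`
the supply is summable, and summing the dissipation inequality from `η(0) = 0` gives the
performance bound with `ε = μ`.
-/

section QuadraticEstimates

variable {ι κ : Type*} [Fintype ι] [Fintype κ]

theorem dotProduct_self_nonneg (v : ι → ℝ) : 0 ≤ v ⬝ᵥ v := by
  simpa using dotProduct_star_self_nonneg v

theorem sq_le_dotProduct_self (v : ι → ℝ) (i : ι) : v i ^ 2 ≤ v ⬝ᵥ v := by
  rw [sq]
  exact Finset.single_le_sum (fun j _ => mul_self_nonneg (v j)) (Finset.mem_univ i)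

theorem two_mul_dotProduct_le {δ : ℝ} (hδ : 0 < δ) (a b : ι → ℝ) :
    2 * (a ⬝ᵥ b) ≤ δ * (a ⬝ᵥ a) + δ⁻¹ * (b ⬝ᵥ b) := by
  have h := dotProduct_self_nonneg (δ • a - b)
  simp only [sub_dotProduct, dotProduct_sub, smul_dotProduct, dotProduct_smul, smul_eq_mul,
    dotProduct_comm b a] at h
  refine le_of_mul_le_mul_left ?_ hδ
  rw [mul_add, ← mul_assoc δ δ⁻¹, mul_inv_cancel₀ hδ.ne']
  linarith

theorem exists_mulVec_dotProduct_mulVec_le (M : Matrix ι κ ℝ) :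
    ∃ c > 0, ∀ v, (M *ᵥ v) ⬝ᵥ (M *ᵥ v) ≤ c * (v ⬝ᵥ v) := by
  refine ⟨∑ i, ∑ j, M i j ^ 2 + 1, by positivity, fun v => ?_⟩
  have hcs : (M *ᵥ v) ⬝ᵥ (M *ᵥ v) ≤ (∑ i, ∑ j, M i j ^ 2) * (v ⬝ᵥ v) := by
    rw [Finset.sum_mul]
    refine Finset.sum_le_sum fun i _ => ?_
    simpa [mulVec, dotProduct, sq] using Finset.sum_mul_sq_le_sq_mul_sq Finset.univ (M i) v
  nlinarith [dotProduct_self_nonneg v]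

theorem exists_abs_dotProduct_mulVec_le (M : Matrix ι ι ℝ) :
    ∃ c > 0, ∀ v, |v ⬝ᵥ M *ᵥ v| ≤ c * (v ⬝ᵥ v) := by
  obtain ⟨c, hc, hM⟩ := exists_mulVec_dotProduct_mulVec_le M
  refine ⟨(1 + c) / 2, by positivity, fun v => abs_le.2 ⟨?_, ?_⟩⟩
  · have h := two_mul_dotProduct_le one_pos v (-(M *ᵥ v))
    simp only [dotProduct_neg, neg_dotProduct, neg_neg, inv_one] at h
    linarith [hM v]
  · have h := two_mul_dotProduct_le one_pos v (M *ᵥ v)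
    rw [inv_one] at h
    linarith [hM v]

theorem exists_dotProduct_mulVec_add_le (X : Matrix ι ι ℝ) {δ : ℝ} (hδ : 0 < δ) :
    ∃ K > 0, ∀ a b : ι → ℝ,
      (a + b) ⬝ᵥ X *ᵥ (a + b) ≤ a ⬝ᵥ X *ᵥ a + δ * (a ⬝ᵥ a) + K * (b ⬝ᵥ b) := by
  obtain ⟨c, hc, hsym⟩ := exists_mulVec_dotProduct_mulVec_le (X + Xᵀ)
  obtain ⟨d, hd, hX⟩ := exists_abs_dotProduct_mulVec_le X
  refine ⟨δ⁻¹ * c / 2 + d, by positivity, fun a b => ?_⟩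
  have hexpand : (a + b) ⬝ᵥ X *ᵥ (a + b)
      = a ⬝ᵥ X *ᵥ a + a ⬝ᵥ (X + Xᵀ) *ᵥ b + b ⬝ᵥ X *ᵥ b := by
    rw [add_mulVec, mulVec_transpose, dotProduct_add, dotProduct_comm a (b ᵥ* X),
      ← dotProduct_mulVec, mulVec_add, dotProduct_add, add_dotProduct, add_dotProduct]
    ring
  have hcross := two_mul_dotProduct_le hδ a ((X + Xᵀ) *ᵥ b)
  have hsym' := mul_le_mul_of_nonneg_left (hsym b) (inv_nonneg.2 hδ.le)
  have hb := (le_abs_self _).trans (hX b)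
  nlinarith [dotProduct_self_nonneg a, mul_nonneg hδ.le (dotProduct_self_nonneg a)]

theorem dotProduct_transpose_mul_mul_mulVec (F : Matrix κ ι ℝ) (N : Matrix κ κ ℝ) (v : ι → ℝ) :
    v ⬝ᵥ (Fᵀ * N * F) *ᵥ v = (F *ᵥ v) ⬝ᵥ N *ᵥ (F *ᵥ v) := by
  rw [← mulVec_mulVec, ← mulVec_mulVec, dotProduct_mulVec, vecMul_transpose]

theorem Matrix.PosDef.exists_pos_mul_dotProduct_self_le {M : Matrix ι ι ℝ} (hM : M.PosDef) :
    ∃ μ > 0, ∀ v, μ * (v ⬝ᵥ v) ≤ v ⬝ᵥ M *ᵥ v := by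
  rcases isEmpty_or_nonempty ι with hι | hι
  · exact ⟨1, one_pos, fun v => by simp [Subsingleton.elim v 0]⟩
  set f : (ι → ℝ) → ℝ := fun v => (v ⬝ᵥ M *ᵥ v) / (v ⬝ᵥ v)
  have hpos : ∀ v : ι → ℝ, v ≠ 0 → 0 < v ⬝ᵥ v := fun v hv =>
    lt_of_le_of_ne (dotProduct_self_nonneg v) (Ne.symm (mt dotProduct_self_eq_zero.1 hv))
  have hcont : ContinuousOn f (Metric.sphere 0 1) := by
    refine ContinuousOn.div (by fun_prop) (by fun_prop) fun v hv => (hpos v ?_).ne'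
    exact ne_zero_of_mem_sphere one_ne_zero ⟨v, hv⟩
  obtain ⟨v₀, hv₀, hmin⟩ := (isCompact_sphere (0 : ι → ℝ) 1).exists_isMinOn
    (NormedSpace.sphere_nonempty.2 zero_le_one) hcont
  have hv₀ne : v₀ ≠ 0 := ne_zero_of_mem_sphere one_ne_zero ⟨v₀, hv₀⟩
  refine ⟨f v₀, div_pos (hM.dotProduct_mulVec_pos hv₀ne) (hpos v₀ hv₀ne), fun v => ?_⟩
  rcases eq_or_ne v 0 with rfl | hv
  · simp
  have hscale : f (‖v‖⁻¹ • v) = f v := by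
    simp only [f, mulVec_smul, dotProduct_smul, smul_dotProduct, smul_eq_mul]
    have hn : ‖v‖⁻¹ ≠ 0 := inv_ne_zero (norm_ne_zero_iff.2 hv)
    rw [← mul_assoc, ← mul_assoc]
    exact mul_div_mul_left _ _ (mul_ne_zero hn hn)
  have hle : f v₀ ≤ f v := hscale ▸ hmin (by simp [norm_smul, hv])
  exact (le_div_iff₀ (hpos v hv)).1 hle

end QuadraticEstimates

theorem summable_of_le_sub_mul_add {V g h : ℕ → ℝ} {ν : ℝ} (hν : 0 < ν) (hV : ∀ t, 0 ≤ V t)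
    (hg : ∀ t, 0 ≤ g t) (hh : Summable h) (hh₀ : ∀ t, 0 ≤ h t)
    (hstep : ∀ t, V (t + 1) ≤ V t - ν * g t + h t) : Summable g := by
  refine summable_of_sum_range_le (c := (V 0 + ∑' t, h t) / ν) hg fun N => ?_
  have htel : V N - V 0 ≤ ∑ t ∈ Finset.range N, (h t - ν * g t) := by
    rw [← Finset.sum_range_sub]
    exact Finset.sum_le_sum fun t _ => by linarith [hstep t]
  rw [Finset.sum_sub_distrib, ← Finset.mul_sum] at htel
  rw [le_div_iff₀' hν]
  linarith [hV N, hh.sum_le_tsum (Finset.range N) fun t _ => hh₀ t]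

theorem tendsto_nhds_zero_of_summable_dotProduct_self {ι : Type*} [Fintype ι] {x : ℕ → ι → ℝ}
    (hx : Summable fun t => x t ⬝ᵥ x t) : Tendsto x atTop (𝓝 0) := by
  have hsqrt : Tendsto (fun t => √(x t ⬝ᵥ x t)) atTop (𝓝 0) := by
    simpa using hx.tendsto_atTop_zero.sqrt
  refine tendsto_pi_nhds.2 fun i => squeeze_zero_norm (fun t => ?_) hsqrt
  exact Real.abs_le_sqrt (sq_le_dotProduct_self (x t) i)

theorem summable_dotProduct_mulVec {ι : Type*} [Fintype ι] (M : Matrix ι ι ℝ)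
    {v : ℕ → ι → ℝ} (hv : Summable fun t => v t ⬝ᵥ v t) :
    Summable fun t => v t ⬝ᵥ M *ᵥ v t := by
  obtain ⟨c, -, hc⟩ := exists_abs_dotProduct_mulVec_le M
  exact Summable.of_norm_bounded (hv.mul_left c) fun t => hc (v t)

section Dissipativity

variable {St In Out : Type*} [Fintype St] [Fintype In] [Fintype Out]

theorem exists_lyapunov_input_bound (𝒜 : Matrix St St ℝ) (ℬ : Matrix St In ℝ)
    (X : Matrix St St ℝ) {μ : ℝ} (hμ : 0 < μ)
    (hdec : ∀ ξ, (𝒜 *ᵥ ξ) ⬝ᵥ X *ᵥ (𝒜 *ᵥ ξ) ≤ ξ ⬝ᵥ X *ᵥ ξ - μ * (ξ ⬝ᵥ ξ)) :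
    ∃ K > 0, ∀ ξ w, (𝒜 *ᵥ ξ + ℬ *ᵥ w) ⬝ᵥ X *ᵥ (𝒜 *ᵥ ξ + ℬ *ᵥ w)
      ≤ ξ ⬝ᵥ X *ᵥ ξ - μ / 2 * (ξ ⬝ᵥ ξ) + K * (w ⬝ᵥ w) := by
  obtain ⟨a, ha, h𝒜⟩ := exists_mulVec_dotProduct_mulVec_le 𝒜
  obtain ⟨b, hb, hℬ⟩ := exists_mulVec_dotProduct_mulVec_le ℬ
  have hδ : 0 < μ / (2 * a) := by positivity
  obtain ⟨K, hK, hadd⟩ := exists_dotProduct_mulVec_add_le X hδ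
  refine ⟨K * b, by positivity, fun ξ w => ?_⟩
  have hδa : μ / (2 * a) * (a * (ξ ⬝ᵥ ξ)) = μ / 2 * (ξ ⬝ᵥ ξ) := by
    field_simp
  calc (𝒜 *ᵥ ξ + ℬ *ᵥ w) ⬝ᵥ X *ᵥ (𝒜 *ᵥ ξ + ℬ *ᵥ w)
      ≤ (𝒜 *ᵥ ξ) ⬝ᵥ X *ᵥ (𝒜 *ᵥ ξ) + μ / (2 * a) * ((𝒜 *ᵥ ξ) ⬝ᵥ (𝒜 *ᵥ ξ))
          + K * ((ℬ *ᵥ w) ⬝ᵥ (ℬ *ᵥ w)) := hadd _ _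
    _ ≤ (ξ ⬝ᵥ X *ᵥ ξ - μ * (ξ ⬝ᵥ ξ)) + μ / (2 * a) * (a * (ξ ⬝ᵥ ξ)) + K * (b * (w ⬝ᵥ w)) := by
        gcongr
        exacts [hdec ξ, h𝒜 ξ, hℬ w]
    _ = ξ ⬝ᵥ X *ᵥ ξ - μ / 2 * (ξ ⬝ᵥ ξ) + K * b * (w ⬝ᵥ w) := by
        rw [hδa]; ring

theorem sum_range_supply_le_of_dissipation {𝒜 : Matrix St St ℝ} {ℬ : Matrix St In ℝ}
    {𝒞 : Matrix Out St ℝ} {𝒟 : Matrix Out In ℝ} {P : Matrix (In ⊕ Out) (In ⊕ Out) ℝ}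
    {X : Matrix St St ℝ} (hX : X.PosSemidef) {μ : ℝ} (hμ : 0 ≤ μ)
    (hdiss : ∀ ξ w, (𝒜 *ᵥ ξ + ℬ *ᵥ w) ⬝ᵥ X *ᵥ (𝒜 *ᵥ ξ + ℬ *ᵥ w) - ξ ⬝ᵥ X *ᵥ ξ
        + Sum.elim w (𝒞 *ᵥ ξ + 𝒟 *ᵥ w) ⬝ᵥ P *ᵥ Sum.elim w (𝒞 *ᵥ ξ + 𝒟 *ᵥ w)
      ≤ -μ * (ξ ⬝ᵥ ξ + w ⬝ᵥ w))
    {x : ℕ → St → ℝ} {u : ℕ → In → ℝ} {y : ℕ → Out → ℝ} (htraj : IsTraj 𝒜 ℬ 𝒞 𝒟 x u y)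
    (hx₀ : x 0 = 0) (N : ℕ) :
    ∑ t ∈ Finset.range N, Sum.elim (u t) (y t) ⬝ᵥ P *ᵥ Sum.elim (u t) (y t)
      ≤ -μ * ∑ t ∈ Finset.range N, u t ⬝ᵥ u t := by
  have htel : x N ⬝ᵥ X *ᵥ x N - x 0 ⬝ᵥ X *ᵥ x 0
      + ∑ t ∈ Finset.range N, Sum.elim (u t) (y t) ⬝ᵥ P *ᵥ Sum.elim (u t) (y t)
      ≤ ∑ t ∈ Finset.range N, -μ * (u t ⬝ᵥ u t) := by
    rw [← Finset.sum_range_sub (fun t => x t ⬝ᵥ X *ᵥ x t), ← Finset.sum_add_distrib]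
    refine Finset.sum_le_sum fun t _ => ?_
    have h := hdiss (x t) (u t)
    rw [← (htraj t).1, ← (htraj t).2] at h
    nlinarith [mul_nonneg hμ (dotProduct_self_nonneg (x t))]
  rw [Finset.mul_sum]
  simp only [hx₀, zero_dotProduct, sub_zero] at htel
  linarith [by simpa using hX.dotProduct_mulVec_nonneg (x N)]

theorem quadPerf_of_dissipation (𝒜 : Matrix St St ℝ) (ℬ : Matrix St In ℝ)
    (𝒞 : Matrix Out St ℝ) (𝒟 : Matrix Out In ℝ) (P : Matrix (In ⊕ Out) (In ⊕ Out) ℝ)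
    {X : Matrix St St ℝ} (hX : X.PosSemidef) {μ : ℝ} (hμ : 0 < μ)
    (hdiss : ∀ ξ w, (𝒜 *ᵥ ξ + ℬ *ᵥ w) ⬝ᵥ X *ᵥ (𝒜 *ᵥ ξ + ℬ *ᵥ w) - ξ ⬝ᵥ X *ᵥ ξ
        + Sum.elim w (𝒞 *ᵥ ξ + 𝒟 *ᵥ w) ⬝ᵥ P *ᵥ Sum.elim w (𝒞 *ᵥ ξ + 𝒟 *ᵥ w)
      ≤ -μ * (ξ ⬝ᵥ ξ + w ⬝ᵥ w))
    (hP : ∀ z, 0 ≤ Sum.elim 0 z ⬝ᵥ P *ᵥ Sum.elim 0 z) :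
    QuadPerf 𝒜 ℬ 𝒞 𝒟 P := by
  have hV : ∀ ξ, 0 ≤ ξ ⬝ᵥ X *ᵥ ξ := fun ξ => by simpa using hX.dotProduct_mulVec_nonneg ξ
  have hdec : ∀ ξ, (𝒜 *ᵥ ξ) ⬝ᵥ X *ᵥ (𝒜 *ᵥ ξ) ≤ ξ ⬝ᵥ X *ᵥ ξ - μ * (ξ ⬝ᵥ ξ) := fun ξ => by
    have h := hdiss ξ 0
    simp only [mulVec_zero, add_zero, dotProduct_zero] at h
    linarith [hP (𝒞 *ᵥ ξ)]
  refine ⟨fun x hx => ?_, ?_⟩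
  · refine tendsto_nhds_zero_of_summable_dotProduct_self <| summable_of_le_sub_mul_add hμ
      (fun t => hV (x t)) (fun t => dotProduct_self_nonneg _) summable_zero (fun _ => le_rfl)
      fun t => ?_
    simpa [hx t] using hdec (x t)
  classical
  obtain ⟨K, hK, hISS⟩ := exists_lyapunov_input_bound 𝒜 ℬ X hμ hdec
  refine ⟨μ, hμ, fun x u y htraj hx₀ hu => ?_⟩
  have hx : Summable fun t => x t ⬝ᵥ x t :=
    summable_of_le_sub_mul_add (half_pos hμ) (fun t => hV (x t))
      (fun t => dotProduct_self_nonneg _) (hu.mul_left K)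
      (fun t => mul_nonneg hK.le (dotProduct_self_nonneg _))
      fun t => (htraj t).1 ▸ hISS (x t) (u t)
  have hy : ∀ t, Sum.elim (u t) (y t) = fromBlocks 0 1 𝒞 𝒟 *ᵥ Sum.elim (x t) (u t) := fun t => by
    simp [fromBlocks_mulVec, (htraj t).2]
  have hs : Summable fun t => Sum.elim (u t) (y t) ⬝ᵥ P *ᵥ Sum.elim (u t) (y t) := by
    simp only [hy, ← dotProduct_transpose_mul_mul_mulVec]
    refine summable_dotProduct_mulVec _ ?_
    simpa only [sumElim_dotProduct_sumElim] using hx.add hu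
  have hpartial := sum_range_supply_le_of_dissipation hX hμ.le hdiss htraj hx₀
  exact ⟨_, hs.hasSum.tendsto_sum_nat, le_of_tendsto_of_tendsto' hs.hasSum.tendsto_sum_nat
    (hu.hasSum.tendsto_sum_nat.const_mul (-μ)) hpartial⟩

end Dissipativity

theorem fromBlocks_self_mulVec_sumElim_neg {m n α : Type*} [Fintype n] [Ring α]
    (M : Matrix m n α) (y : n → α) : fromBlocks M M M M *ᵥ Sum.elim (-y) y = 0 := by
  ext (i | i) <;> simp [fromBlocks_mulVec, mulVec_neg]

theorem dotProduct_Ptil_mulVec_sumElim_zero_nonneg {m q : ℕ} (T : ℕ)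
    (Q : Matrix (Fin m) (Fin m) ℝ) (S : Matrix (Fin m) (Fin q) ℝ)
    {R : Matrix (Fin q) (Fin q) ℝ} (hR : R.PosSemidef) (z : Fin T × Fin q → ℝ) :
    0 ≤ Sum.elim 0 z ⬝ᵥ Ptil T Q S R *ᵥ Sum.elim 0 z := by
  simpa [Ptil, fromBlocks_mulVec] using (PosSemidef.one.kronecker hR).dotProduct_mulVec_nonneg z

theorem dotProduct_Ltil_mulVec_reset {n₁ n₂ m q : ℕ} (T : ℕ)
    (A : Matrix (Fin n₁ ⊕ Fin n₂) (Fin n₁ ⊕ Fin n₂) ℝ) (B : Matrix (Fin n₁ ⊕ Fin n₂) (Fin m) ℝ)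
    (C : Matrix (Fin q) (Fin n₁ ⊕ Fin n₂) ℝ) (D : Matrix (Fin q) (Fin m) ℝ)
    (Q : Matrix (Fin m) (Fin m) ℝ) (S : Matrix (Fin m) (Fin q) ℝ) (R : Matrix (Fin q) (Fin q) ℝ)
    (M : Matrix (Fin n₂) (Fin n₂) ℝ) (X : Matrix (Fin n₁ ⊕ Fin n₂) (Fin n₁ ⊕ Fin n₂) ℝ) (τ : ℝ)
    (ξ : Fin n₁ ⊕ Fin n₂ → ℝ) (w : Fin T × Fin m → ℝ) :
    let v := Sum.elim ξ (Sum.elim w (-(Cu n₁ n₂ *ᵥ ξ)))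
    let ξ' := (A ^ T - Butil T A * Cu n₁ n₂) *ᵥ ξ + Btil T A B *ᵥ w
    let z := (Ctil T A C - Dutil T A C * Cu n₁ n₂) *ᵥ ξ + Dtil T A B C D *ᵥ w
    v ⬝ᵥ Ltil T A B C D Q S R (fromBlocks M M M M) X τ *ᵥ v
      = ξ' ⬝ᵥ X *ᵥ ξ' - ξ ⬝ᵥ X *ᵥ ξ + Sum.elim w z ⬝ᵥ Ptil T Q S R *ᵥ Sum.elim w z := by
  intro v ξ' z
  have hstate : fromBlocks 1 0 (A ^ T) (fromCols (Btil T A B) (Butil T A)) *ᵥ v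
      = Sum.elim ξ ξ' := by
    simp [v, ξ', fromBlocks_mulVec, sub_mulVec, ← mulVec_mulVec, mulVec_neg]
    congr 1
    abel
  have hout : fromBlocks 0 (fromCols 1 0) (Ctil T A C) (fromCols (Dtil T A B C D) (Dutil T A C))
      *ᵥ v = Sum.elim w z := by
    simp [v, z, fromBlocks_mulVec, sub_mulVec, ← mulVec_mulVec, mulVec_neg]
    congr 1
    abel
  have hreset : fromBlocks 0 (fromCols 0 1) (Cu n₁ n₂) 0 *ᵥ v
      = Sum.elim (-(Cu n₁ n₂ *ᵥ ξ)) (Cu n₁ n₂ *ᵥ ξ) := by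
    simp [v, fromBlocks_mulVec]
  rw [Ltil, add_mulVec, add_mulVec, dotProduct_add, dotProduct_add,
    dotProduct_transpose_mul_mul_mulVec, dotProduct_transpose_mul_mul_mulVec,
    dotProduct_transpose_mul_mul_mulVec, hstate, hout, hreset, smul_mulVec,
    fromBlocks_self_mulVec_sumElim_neg]
  simp [fromBlocks_mulVec, sumElim_dotProduct_sumElim, neg_mulVec]
  ring

theorem quadperf_reset_of_LMI_general {n₁ n₂ m q : ℕ} (T : ℕ)
    (A : Matrix (Fin n₁ ⊕ Fin n₂) (Fin n₁ ⊕ Fin n₂) ℝ)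
    (B : Matrix (Fin n₁ ⊕ Fin n₂) (Fin m) ℝ)
    (C : Matrix (Fin q) (Fin n₁ ⊕ Fin n₂) ℝ) (D : Matrix (Fin q) (Fin m) ℝ)
    (Q : Matrix (Fin m) (Fin m) ℝ) (S : Matrix (Fin m) (Fin q) ℝ)
    (R : Matrix (Fin q) (Fin q) ℝ)
    (hRpsd : R.PosSemidef)
    (hLMI : ∃ (X : Matrix (Fin n₁ ⊕ Fin n₂) (Fin n₁ ⊕ Fin n₂) ℝ) (τ : ℝ),
      X.IsSymm ∧ X.PosDef ∧ 0 < τ ∧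
      (-(Ltil T A B C D Q S R
          (Matrix.fromBlocks ((-2 : ℝ) • 1) ((-2 : ℝ) • 1)
            ((-2 : ℝ) • 1) ((-2 : ℝ) • 1)) X τ)).PosDef) :
    QuadPerf (A ^ T - Butil T A * Cu n₁ n₂) (Btil T A B)
      (Ctil T A C - Dutil T A C * Cu n₁ n₂) (Dtil T A B C D) (Ptil T Q S R) := by
  obtain ⟨X, τ, -, hX, -, hL⟩ := hLMI
  obtain ⟨μ, hμ, hLμ⟩ := hL.exists_pos_mul_dotProduct_self_le
  refine quadPerf_of_dissipation _ _ _ _ _ hX.posSemidef hμ (fun ξ w => ?_)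
    (dotProduct_Ptil_mulVec_sumElim_zero_nonneg T Q S hRpsd)
  have h := hLμ (Sum.elim ξ (Sum.elim w (-(Cu n₁ n₂ *ᵥ ξ))))
  rw [neg_mulVec, dotProduct_neg, dotProduct_Ltil_mulVec_reset] at h
  simp only [sumElim_dotProduct_sumElim, neg_dotProduct, dotProduct_neg, neg_neg] at h
  nlinarith [mul_nonneg hμ.le (dotProduct_self_nonneg (Cu n₁ n₂ *ᵥ ξ))]

/-- If `R ⪰ 0` and the LMI `L̃(X, τ) ≺ 0` with the reset multiplier
`P_u = [[-2I, -2I], [-2I, -2I]]` is feasible for some symmetric `X ≻ 0` and `τ > 0`,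
then the lifted reset closed loop `η(k+1) = (Ã - B̃_u C_u) η(k) + B̃ w̃(k)`,
`z̃(k) = (C̃ - D̃_u C_u) η(k) + D̃ w̃(k)` satisfies quadratic performance specified
by `P̃`. -/
theorem quadperf_reset_of_LMI {n₁ n₂ m q : ℕ} (T : ℕ) (hT : 1 ≤ T)
    (A : Matrix (Fin n₁ ⊕ Fin n₂) (Fin n₁ ⊕ Fin n₂) ℝ)
    (B : Matrix (Fin n₁ ⊕ Fin n₂) (Fin m) ℝ)
    (C : Matrix (Fin q) (Fin n₁ ⊕ Fin n₂) ℝ) (D : Matrix (Fin q) (Fin m) ℝ)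
    (Q : Matrix (Fin m) (Fin m) ℝ) (S : Matrix (Fin m) (Fin q) ℝ)
    (R : Matrix (Fin q) (Fin q) ℝ) (hQ : Q.IsSymm) (hR : R.IsSymm)
    (hRpsd : R.PosSemidef)
    (hLMI : ∃ (X : Matrix (Fin n₁ ⊕ Fin n₂) (Fin n₁ ⊕ Fin n₂) ℝ) (τ : ℝ),
      X.IsSymm ∧ X.PosDef ∧ 0 < τ ∧
      (-(Ltil T A B C D Q S R
          (Matrix.fromBlocks ((-2 : ℝ) • 1) ((-2 : ℝ) • 1)
            ((-2 : ℝ) • 1) ((-2 : ℝ) • 1)) X τ)).PosDef) :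
    QuadPerf (A ^ T - Butil T A * Cu n₁ n₂) (Btil T A B)
      (Ctil T A C - Dutil T A C * Cu n₁ n₂) (Dtil T A B C D) (Ptil T Q S R) :=
  quadperf_reset_of_LMI_general T A B C D Q S R hRpsd hLMI
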